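/- For the simple symmetric random walk on ℤ started at 0, P(T > 2n) = P(S_{2n} ∈ {0,2}) = 4^{−n} (C(2n,n) + C(2n,n+1)), where T is the first hitting time of 2 and C(·,·) denotes binomial coefficients. -/

import Mathlib

/-!
Reflecting a path after its first visit to a level `a ≥ 0` exchanges the paths that reach `a`
and end at or below `a` with the paths that end at or above `a`; combined with the symmetry
`S ↦ -S` this gives `#{max_{k ≤ m} S_k < a} = #{-a < S_m ≤ a}`. For `a = 2` and `m = 2n`,
parity leaves `S_{2n} ∈ {0, 2}`. Events determined by the first `m` steps are transferred to
path counts because `(ξ_0, …, ξ_{m-1})` is almost surely uniform on `{±1}^m`.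
-/

open MeasureTheory ProbabilityTheory Finset
open scoped symmDiff

namespace SimpleRandomWalk

section Paths

/- A path of length `m` is encoded by the set `s ⊆ range m` of the indices of its up-steps. -/

def stepSign (s : Finset ℕ) (i : ℕ) : ℤ := if i ∈ s then 1 else -1

def pathSum (s : Finset ℕ) (k : ℕ) : ℤ := ∑ i ∈ range k, stepSign s i

def HitsWithin (a : ℤ) (m : ℕ) (s : Finset ℕ) : Prop := ∃ k ≤ m, pathSum s k = a

instance (a : ℤ) (m : ℕ) : DecidablePred (HitsWithin a m) :=
  fun s => inferInstanceAs (Decidable (∃ k ≤ m, pathSum s k = a))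

/-- The first visit to `a` up to time `m`, and `m` if there is none. -/
def firstHit (a : ℤ) (m : ℕ) (s : Finset ℕ) : ℕ :=
  Nat.find (⟨m, Or.inr rfl⟩ : ∃ k, pathSum s k = a ∨ k = m)

def reflect (a : ℤ) (m : ℕ) (s : Finset ℕ) : Finset ℕ := s ∆ Ico (firstHit a m s) m

variable {a : ℤ} {i k m : ℕ} {s t : Finset ℕ}

lemma stepSign_le_one : stepSign s i ≤ 1 := by
  unfold stepSign; split_ifs <;> norm_num

lemma stepSign_eq_one_iff : stepSign s i = 1 ↔ i ∈ s := by
  unfold stepSign; split_ifs with h <;> simp [h]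

@[simp] lemma pathSum_zero : pathSum s 0 = 0 := sum_range_zero _

lemma pathSum_succ : pathSum s (k + 1) = pathSum s k + stepSign s k := sum_range_succ _ _

lemma pathSum_eq_two_mul_card_sub (hs : s ⊆ range m) : pathSum s m = 2 * #s - m := by
  have hsign : ∀ i, stepSign s i = 2 * (if i ∈ s then 1 else 0) - 1 := by
    intro i; unfold stepSign; split_ifs <;> norm_num
  simp only [pathSum, hsign, sum_sub_distrib, ← mul_sum, sum_boole, filter_mem_eq_inter,
    inter_eq_right.2 hs, sum_const, card_range, nsmul_eq_mul, mul_one]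

/-- Up-steps have size one, so the path cannot jump over `a`. -/
lemma hitsWithin_of_le_pathSum (ha : 0 ≤ a) (hkm : k ≤ m) (h : a ≤ pathSum s k) :
    HitsWithin a m s := by
  induction k with
  | zero => exact ⟨0, Nat.zero_le m, by simp only [pathSum_zero] at h ⊢; omega⟩
  | succ k ih =>
    by_cases hk : a ≤ pathSum s k
    · exact ih (by omega) hk
    · refine ⟨k + 1, hkm, ?_⟩
      have := stepSign_le_one (s := s) (i := k)
      rw [pathSum_succ] at h ⊢
      omega

lemma firstHit_le : firstHit a m s ≤ m := Nat.find_min' _ (Or.inr rfl)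

lemma hitsWithin_iff_pathSum_firstHit : HitsWithin a m s ↔ pathSum s (firstHit a m s) = a := by
  refine ⟨fun ⟨k, hkm, hk⟩ => ?_, fun h => ⟨_, firstHit_le, h⟩⟩
  have hle : firstHit a m s ≤ k := Nat.find_min' _ (Or.inl hk)
  rcases Nat.find_spec (⟨m, Or.inr rfl⟩ : ∃ k, pathSum s k = a ∨ k = m) with h | h
  · exact h
  · have hm : firstHit a m s = m := h
    exact (show k = firstHit a m s by omega) ▸ hk

lemma firstHit_congr (h : ∀ j ≤ firstHit a m s, pathSum t j = pathSum s j) :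
    firstHit a m t = firstHit a m s := by
  have hspec := Nat.find_spec (⟨m, Or.inr rfl⟩ : ∃ k, pathSum s k = a ∨ k = m)
  have hmin := fun j (hj : j < firstHit a m s) =>
    Nat.find_min (⟨m, Or.inr rfl⟩ : ∃ k, pathSum s k = a ∨ k = m) hj
  refine (Nat.find_eq_iff _).2 ⟨?_, fun j hj => ?_⟩
  · rwa [h _ le_rfl]
  · rw [h j hj.le]
    exact hmin j hj

lemma stepSign_symmDiff_Ico {τ : ℕ} (hi : i ∈ Ico τ m) :
    stepSign (s ∆ Ico τ m) i = -stepSign s i := by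
  by_cases his : i ∈ s <;> simp [stepSign, mem_symmDiff, his, hi]

lemma pathSum_symmDiff_Ico_of_le {τ : ℕ} (hk : k ≤ τ) :
    pathSum (s ∆ Ico τ m) k = pathSum s k :=
  sum_congr rfl fun i hi => by
    have : i ∉ Ico τ m := by simp only [mem_Ico, mem_range] at hi ⊢; omega
    by_cases his : i ∈ s <;> simp [stepSign, mem_symmDiff, his, this]

lemma pathSum_symmDiff_Ico {τ : ℕ} (hτk : τ ≤ k) (hkm : k ≤ m) :
    pathSum (s ∆ Ico τ m) k = 2 * pathSum s τ - pathSum s k := by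
  induction k, hτk using Nat.le_induction with
  | base => rw [pathSum_symmDiff_Ico_of_le le_rfl]; ring
  | succ k hτk ih =>
    rw [pathSum_succ, pathSum_succ, ih (by omega),
      stepSign_symmDiff_Ico (mem_Ico.2 ⟨hτk, by omega⟩)]
    ring

lemma firstHit_reflect : firstHit a m (reflect a m s) = firstHit a m s :=
  firstHit_congr fun _ hj => pathSum_symmDiff_Ico_of_le hj

lemma reflect_reflect : reflect a m (reflect a m s) = s := by
  rw [reflect, firstHit_reflect, reflect, symmDiff_symmDiff_cancel_right]

lemma hitsWithin_reflect_iff : HitsWithin a m (reflect a m s) ↔ HitsWithin a m s := by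
  rw [hitsWithin_iff_pathSum_firstHit, hitsWithin_iff_pathSum_firstHit, firstHit_reflect, reflect,
    pathSum_symmDiff_Ico_of_le le_rfl]

lemma pathSum_reflect (h : HitsWithin a m s) : pathSum (reflect a m s) m = 2 * a - pathSum s m := by
  rw [reflect, pathSum_symmDiff_Ico firstHit_le le_rfl, hitsWithin_iff_pathSum_firstHit.1 h]

lemma reflect_subset (hs : s ⊆ range m) : reflect a m s ⊆ range m :=
  symmDiff_subset_union.trans (union_subset hs fun i hi => by simp at hi ⊢; omega)

lemma card_hitsWithin_pathSum_le (ha : 0 ≤ a) :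
    #{s ∈ (range m).powerset | pathSum s m ≤ a ∧ HitsWithin a m s} =
      #{s ∈ (range m).powerset | a ≤ pathSum s m} := by
  refine card_nbij' (reflect a m) (reflect a m) ?_ ?_ (fun _ _ => reflect_reflect)
    (fun _ _ => reflect_reflect)
  · intro s hs
    simp only [coe_filter, mem_powerset, Set.mem_ofPred_eq] at hs ⊢
    refine ⟨reflect_subset hs.1, ?_⟩
    rw [pathSum_reflect hs.2.2]
    omega
  · intro s hs
    simp only [coe_filter, mem_powerset, Set.mem_ofPred_eq] at hs ⊢
    have hhit := hitsWithin_of_le_pathSum ha le_rfl hs.2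
    refine ⟨reflect_subset hs.1, ?_, hitsWithin_reflect_iff.2 hhit⟩
    rw [pathSum_reflect hhit]
    omega

lemma pathSum_range_sdiff (hk : k ≤ m) : pathSum (range m \ s) k = -pathSum s k := by
  rw [pathSum, pathSum, ← sum_neg_distrib]
  refine sum_congr rfl fun i hi => ?_
  have him : i ∈ range m := by simp only [mem_range] at hi ⊢; omega
  by_cases his : i ∈ s <;> simp [stepSign, his, him]

lemma card_filter_pathSum_neg (p : ℤ → Prop) [DecidablePred p] :
    #{s ∈ (range m).powerset | p (pathSum s m)} =
      #{s ∈ (range m).powerset | p (-pathSum s m)} := by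
  have hinv : ∀ s ∈ (range m).powerset, range m \ (range m \ s) = s :=
    fun s hs => Finset.sdiff_sdiff_eq_self (mem_powerset.1 hs)
  refine card_nbij' (range m \ ·) (range m \ ·) ?_ ?_
    (fun s hs => hinv s (mem_filter.1 hs).1) (fun s hs => hinv s (mem_filter.1 hs).1)
  · intro s hs
    simp only [coe_filter, mem_powerset, Set.mem_ofPred_eq] at hs ⊢
    rw [pathSum_range_sdiff le_rfl, neg_neg]
    exact ⟨sdiff_subset, hs.2⟩
  · intro s hs
    simp only [coe_filter, mem_powerset, Set.mem_ofPred_eq] at hs ⊢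
    rw [pathSum_range_sdiff le_rfl]
    exact ⟨sdiff_subset, hs.2⟩

theorem card_not_hitsWithin (ha : 0 ≤ a) :
    #{s ∈ (range m).powerset | ¬HitsWithin a m s} =
      #{s ∈ (range m).powerset | -a < pathSum s m ∧ pathSum s m ≤ a} := by
  have hsplit_hit := card_filter_add_card_filter_not
    (s := {s ∈ (range m).powerset | pathSum s m ≤ a}) (HitsWithin a m)
  have hsplit_neg := card_filter_add_card_filter_not
    (s := {s ∈ (range m).powerset | pathSum s m ≤ a}) (fun s => pathSum s m ≤ -a)
  simp only [filter_filter] at hsplit_hit hsplit_neg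
  have hnot_hit : {s ∈ (range m).powerset | pathSum s m ≤ a ∧ ¬HitsWithin a m s} =
      {s ∈ (range m).powerset | ¬HitsWithin a m s} :=
    filter_congr fun s _ => and_iff_right_of_imp fun h => by
      by_contra hlt
      exact h (hitsWithin_of_le_pathSum ha le_rfl (by omega))
  have hle_neg : {s ∈ (range m).powerset | pathSum s m ≤ a ∧ pathSum s m ≤ -a} =
      {s ∈ (range m).powerset | pathSum s m ≤ -a} :=
    filter_congr fun s _ => and_iff_right_of_imp fun h => by omega
  have hmid : {s ∈ (range m).powerset | pathSum s m ≤ a ∧ ¬pathSum s m ≤ -a} =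
      {s ∈ (range m).powerset | -a < pathSum s m ∧ pathSum s m ≤ a} :=
    filter_congr fun s _ => by rw [not_le, and_comm]
  have hflip : #{s ∈ (range m).powerset | a ≤ pathSum s m} =
      #{s ∈ (range m).powerset | pathSum s m ≤ -a} := by
    rw [card_filter_pathSum_neg (a ≤ ·)]
    exact congrArg card (filter_congr fun s _ => le_neg)
  rw [hnot_hit, card_hitsWithin_pathSum_le ha, hflip] at hsplit_hit
  rw [hle_neg, hmid] at hsplit_neg
  omega

lemma card_not_hitsWithin_two (n : ℕ) :
    #{s ∈ (range (2 * n)).powerset | ¬HitsWithin 2 (2 * n) s} =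
      #{s ∈ (range (2 * n)).powerset | pathSum s (2 * n) = 0 ∨ pathSum s (2 * n) = 2} := by
  rw [card_not_hitsWithin (by norm_num)]
  refine congrArg card (filter_congr fun s hs => ?_)
  have := pathSum_eq_two_mul_card_sub (mem_powerset.1 hs)
  omega

lemma card_pathSum_eq_zero_or_two (n : ℕ) :
    #{s ∈ (range (2 * n)).powerset | pathSum s (2 * n) = 0 ∨ pathSum s (2 * n) = 2} =
      (2 * n).choose n + (2 * n).choose (n + 1) := by
  have hcard : {s ∈ (range (2 * n)).powerset | pathSum s (2 * n) = 0 ∨ pathSum s (2 * n) = 2} =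
      powersetCard n (range (2 * n)) ∪ powersetCard (n + 1) (range (2 * n)) := by
    rw [powersetCard_eq_filter, powersetCard_eq_filter, ← filter_or]
    refine filter_congr fun s hs => ?_
    have := pathSum_eq_two_mul_card_sub (mem_powerset.1 hs)
    omega
  rw [hcard, card_union_of_disjoint
      ((range (2 * n)).pairwise_disjoint_powersetCard (Nat.succ_ne_self n).symm),
    card_powersetCard, card_powersetCard, card_range]

end Paths

section Walk

variable {Ω : Type*} {ξ : ℕ → Ω → ℤ} {m : ℕ} {ω : Ω} {s : Finset ℕ}

def upSteps (ξ : ℕ → Ω → ℤ) (m : ℕ) (ω : Ω) : Finset ℕ :=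
  {i ∈ range m | ξ i ω = 1}

def cylinder (ξ : ℕ → Ω → ℤ) (m : ℕ) (s : Finset ℕ) : Set Ω :=
  ⋂ i ∈ range m, ξ i ⁻¹' {stepSign s i}

lemma stepSign_upSteps {i : ℕ} (hω : ξ i ω = 1 ∨ ξ i ω = -1) (hi : i < m) :
    stepSign (upSteps ξ m ω) i = ξ i ω := by
  rcases hω with h | h <;> simp [stepSign, upSteps, hi, h]

lemma sum_range_eq_pathSum_upSteps {k : ℕ} (hω : ∀ i, ξ i ω = 1 ∨ ξ i ω = -1)
    (hk : k ≤ m) :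
    ∑ i ∈ range k, ξ i ω = pathSum (upSteps ξ m ω) k :=
  sum_congr rfl fun i hi => (stepSign_upSteps (hω i) (by simp at hi; omega)).symm

lemma mem_cylinder_upSteps (hω : ∀ i, ξ i ω = 1 ∨ ξ i ω = -1) :
    ω ∈ cylinder ξ m (upSteps ξ m ω) := by
  simp only [cylinder, Set.mem_iInter, mem_range, Set.mem_preimage, Set.mem_singleton_iff]
  exact fun i hi => (stepSign_upSteps (hω i) hi).symm

lemma upSteps_eq_of_mem_cylinder (hs : s ⊆ range m) (hω : ω ∈ cylinder ξ m s) :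
    upSteps ξ m ω = s := by
  simp only [cylinder, Set.mem_iInter, mem_range, Set.mem_preimage, Set.mem_singleton_iff] at hω
  ext i
  by_cases hi : i < m
  · simp [upSteps, hi, hω i hi, stepSign_eq_one_iff]
  · simpa [upSteps, hi] using fun h => hi (mem_range.1 (hs h))

variable [MeasurableSpace Ω] {P : Measure Ω}

lemma ae_eq_one_or_eq_neg_one [IsProbabilityMeasure P] (hmeas : ∀ k, Measurable (ξ k))
    (hone : ∀ k, P {ω | ξ k ω = 1} = 1 / 2) (hmone : ∀ k, P {ω | ξ k ω = -1} = 1 / 2) :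
    ∀ᵐ ω ∂P, ∀ i, ξ i ω = 1 ∨ ξ i ω = -1 := by
  refine ae_all_iff.2 fun i => ?_
  have hmeas_one : MeasurableSet {ω | ξ i ω = 1} := hmeas i (measurableSet_singleton 1)
  have hmeas_neg_one : MeasurableSet {ω | ξ i ω = -1} := hmeas i (measurableSet_singleton (-1))
  refine (mem_ae_iff_prob_eq_one (hmeas_one.union hmeas_neg_one)).2 ?_
  rw [measure_union (Set.disjoint_left.2 fun ω h₁ h₂ => by simp_all) hmeas_neg_one,
    hone, hmone, ENNReal.add_halves]

lemma measurableSet_cylinder (hmeas : ∀ k, Measurable (ξ k)) : MeasurableSet (cylinder ξ m s) :=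
  .biInter (range m).countable_toSet fun i _ => hmeas i (measurableSet_singleton _)

lemma measure_cylinder (hindep : iIndepFun ξ P) (hone : ∀ k, P {ω | ξ k ω = 1} = 1 / 2)
    (hmone : ∀ k, P {ω | ξ k ω = -1} = 1 / 2) : P (cylinder ξ m s) = 2⁻¹ ^ m := by
  rw [cylinder, hindep.measure_inter_preimage_eq_mul _ fun _ _ => measurableSet_singleton _]
  have hfactor : ∀ i, P (ξ i ⁻¹' {stepSign s i}) = 2⁻¹ := by
    intro i
    unfold stepSign
    split_ifs
    · exact (hone i).trans (one_div 2)
    · exact (hmone i).trans (one_div 2)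
  rw [prod_congr rfl fun i _ => hfactor i, prod_const, card_range]

theorem measure_setOf_upSteps [IsProbabilityMeasure P] (hmeas : ∀ k, Measurable (ξ k))
    (hindep : iIndepFun ξ P) (hone : ∀ k, P {ω | ξ k ω = 1} = 1 / 2)
    (hmone : ∀ k, P {ω | ξ k ω = -1} = 1 / 2) (Q : Finset ℕ → Prop) [DecidablePred Q] :
    P {ω | Q (upSteps ξ m ω)} = #{s ∈ (range m).powerset | Q s} * 2⁻¹ ^ m := by
  have hae : {ω | Q (upSteps ξ m ω)} =ᵐ[P]
      ⋃ s ∈ {s ∈ (range m).powerset | Q s}, cylinder ξ m s := by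
    refine Filter.eventuallyEq_set.2 ?_
    filter_upwards [ae_eq_one_or_eq_neg_one hmeas hone hmone] with ω hω
    simp only [Set.mem_iUnion, mem_filter, mem_powerset, exists_prop]
    constructor
    · exact fun hQ => ⟨_, ⟨filter_subset _ _, hQ⟩, mem_cylinder_upSteps hω⟩
    · rintro ⟨s, ⟨hs, hQ⟩, hωs⟩
      rwa [upSteps_eq_of_mem_cylinder hs hωs]
  have hdisj : (({s ∈ (range m).powerset | Q s} : Finset _) : Set _).PairwiseDisjoint
      (cylinder ξ m) := by
    intro s hs t ht hst
    simp only [coe_filter, mem_powerset, Set.mem_ofPred_eq] at hs ht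
    exact Set.disjoint_left.2 fun ω hωs hωt =>
      hst ((upSteps_eq_of_mem_cylinder hs.1 hωs).symm.trans (upSteps_eq_of_mem_cylinder ht.1 hωt))
  rw [measure_congr hae, measure_biUnion_finset hdisj fun _ _ => measurableSet_cylinder hmeas,
    sum_congr rfl fun _ _ => measure_cylinder hindep hone hmone, sum_const, nsmul_eq_mul]

end Walk

lemma natCast_lt_iInf_iff {p : ℕ → Prop} {m : ℕ} :
    (m : ℕ∞) < ⨅ (k : ℕ) (_ : p k), (k : ℕ∞) ↔ ∀ k ≤ m, ¬p k := by
  rw [← ENat.add_one_le_iff (ENat.natCast_ne_top m), le_iInf₂_iff]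
  refine forall_congr' fun k => ?_
  norm_cast
  constructor
  · intro h hk hp
    have := h hp
    omega
  · intro h hp
    by_contra hlt
    exact h (by omega) hp

end SimpleRandomWalk

open SimpleRandomWalk in
/-- for the simple symmetric random walk `S` on `ℤ` started at `0`,
with `T` the first hitting time of `2` (valued in `ℕ∞`),
`P(T > 2n) = P(S_{2n} ∈ {0,2}) = 4^{-n} (C(2n,n) + C(2n,n+1))`. -/
theorem hitting_time_two_tail_eq {Ω : Type*} [MeasurableSpace Ω] (P : Measure Ω)
    [IsProbabilityMeasure P]
    (ξ : ℕ → Ω → ℤ) (hmeas : ∀ k, Measurable (ξ k))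
    (hindep : iIndepFun ξ P)
    (hone : ∀ k, P {ω | ξ k ω = 1} = 1 / 2)
    (hmone : ∀ k, P {ω | ξ k ω = -1} = 1 / 2)
    (S : ℕ → Ω → ℤ) (hS : ∀ k ω, S k ω = ∑ i ∈ Finset.range k, ξ i ω)
    (T : Ω → ℕ∞) (hT : ∀ ω, T ω = ⨅ (k : ℕ) (_ : S k ω = 2), (k : ℕ∞))
    (n : ℕ) :
    P {ω | ((2 * n : ℕ) : ℕ∞) < T ω} = P {ω | S (2 * n) ω = 0 ∨ S (2 * n) ω = 2} ∧
    P {ω | S (2 * n) ω = 0 ∨ S (2 * n) ω = 2} =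
      ((Nat.choose (2 * n) n : ENNReal) + Nat.choose (2 * n) (n + 1)) / 4 ^ n := by
  have hpath : ∀ᵐ ω ∂P, ∀ k ≤ 2 * n, S k ω = pathSum (upSteps ξ (2 * n) ω) k :=
    (ae_eq_one_or_eq_neg_one hmeas hone hmone).mono fun ω hω k hk =>
      (hS k ω).trans (sum_range_eq_pathSum_upSteps hω hk)
  have hsurvival : P {ω | ((2 * n : ℕ) : ℕ∞) < T ω} =
      P {ω | ¬HitsWithin 2 (2 * n) (upSteps ξ (2 * n) ω)} := by
    refine measure_congr (Filter.eventuallyEq_set.2 (hpath.mono fun ω hω => ?_))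
    simp only [Set.mem_ofPred_eq, hT, natCast_lt_iInf_iff, HitsWithin, not_exists, not_and]
    exact forall₂_congr fun k hk => by rw [hω k hk]
  have hendpoint : P {ω | S (2 * n) ω = 0 ∨ S (2 * n) ω = 2} =
      P {ω | pathSum (upSteps ξ (2 * n) ω) (2 * n) = 0 ∨
        pathSum (upSteps ξ (2 * n) ω) (2 * n) = 2} := by
    refine measure_congr (Filter.eventuallyEq_set.2 (hpath.mono fun ω hω => ?_))
    simp only [Set.mem_ofPred_eq, hω _ le_rfl]
  rw [hsurvival, hendpoint,
    measure_setOf_upSteps hmeas hindep hone hmone (fun s => ¬HitsWithin 2 (2 * n) s),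
    measure_setOf_upSteps hmeas hindep hone hmone
      (fun s => pathSum s (2 * n) = 0 ∨ pathSum s (2 * n) = 2),
    card_not_hitsWithin_two, card_pathSum_eq_zero_or_two]
  refine ⟨rfl, ?_⟩
  rw [pow_mul, ← ENNReal.inv_pow, ← ENNReal.inv_pow, div_eq_mul_inv]
  norm_num
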